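/- arXiv:2508.12606 — 4 statements merged into one kernel-verified Lean document; each statement's English description precedes it below -/
import Mathlib

section
/- Let X, Y and Z be integrable real random variables with pairwise distinct, strictly increasing continuous cdfs such that X ≼_cx Y ≼_cx Z, and suppose each pair of cdfs has a unique crossing point: d_XY for (F_X, F_Y), d_XZ for (F_X, F_Z), and d_YZ for (F_Y, F_Z). Then d_XZ lies weakly between the other two crossing points, i.e. min{d_XY, d_YZ} ≤ d_XZ ≤ max{d_XY, d_YZ}. -/
/-!
Below `min d_XY d_YZ` we have `F_X ≤ F_Y ≤ F_Z`, while beyond `d_XZ` we have `F_Z ≤ F_X`.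
So if `d_XZ < min d_XY d_YZ`, then `F_X` and `F_Z` agree on the interval between them, and
every interior point of it is again a crossing point of `F_X` and `F_Z`, contradicting uniqueness.
The upper bound is symmetric.
-/

open MeasureTheory ProbabilityTheory

/-- `d` is a crossing point of the cdfs `F` and `G`, where `F` is the cdf of the
convex-order-smaller variable: `F ≤ G` before `d` and `F ≥ G` after `d`. -/
def IsCrossPt (F G : ℝ → ℝ) (d : ℝ) : Prop :=
  (∀ x ≤ d, F x ≤ G x) ∧ ∀ x ≥ d, G x ≤ F x

/-- `d` is the unique crossing point of the cdfs `F` and `G`. -/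
def IsUniqueCrossPt (F G : ℝ → ℝ) (d : ℝ) : Prop :=
  IsCrossPt F G d ∧ ∀ d', IsCrossPt F G d' → d' = d

open Set

variable {F G : ℝ → ℝ} {a b c d : ℝ}

theorem IsCrossPt.of_eqOn_Ioo (h : IsCrossPt F G d) (heq : EqOn F G (Ioo a b))
    (hd : d ∈ Icc a b) (hc : c ∈ Ioo a b) : IsCrossPt F G c := by
  constructor
  · intro x hx
    rcases le_or_gt x d with hxd | hdx
    · exact h.1 x hxd
    · exact (heq ⟨hd.1.trans_lt hdx, hx.trans_lt hc.2⟩).le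
  · intro x hx
    rcases le_or_gt d x with hdx | hxd
    · exact h.2 x hdx
    · exact (heq ⟨hc.1.trans_le hx, hxd.trans_le hd.2⟩).ge

theorem IsUniqueCrossPt.le_of_eqOn_Ioo (h : IsUniqueCrossPt F G d) (heq : EqOn F G (Ioo a b))
    (hd : d ∈ Icc a b) : b ≤ a := by
  by_contra! hab
  obtain ⟨c₁, hac₁, hc₁b⟩ := exists_between hab
  obtain ⟨c₂, hc₁c₂, hc₂b⟩ := exists_between hc₁b
  have hc₁ := h.2 c₁ (h.1.of_eqOn_Ioo heq hd ⟨hac₁, hc₁b⟩)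
  have hc₂ := h.2 c₂ (h.1.of_eqOn_Ioo heq hd ⟨hac₁.trans hc₁c₂, hc₂b⟩)
  linarith

theorem IsUniqueCrossPt.le_of_forall_Ioo_le (h : IsUniqueCrossPt F G d)
    (hle : ∀ x ∈ Ioo d b, F x ≤ G x) : b ≤ d := by
  by_contra! hdb
  have heq : EqOn F G (Ioo d b) := fun x hx => (hle x hx).antisymm (h.1.2 x hx.1.le)
  exact (h.le_of_eqOn_Ioo heq ⟨le_rfl, hdb.le⟩).not_gt hdb

theorem IsUniqueCrossPt.le_of_forall_Ioo_ge (h : IsUniqueCrossPt F G d)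
    (hge : ∀ x ∈ Ioo a d, G x ≤ F x) : d ≤ a := by
  by_contra! had
  have heq : EqOn F G (Ioo a d) := fun x hx => (h.1.1 x hx.2.le).antisymm (hge x hx)
  exact (h.le_of_eqOn_Ioo heq ⟨had.le, le_rfl⟩).not_gt had

theorem crossing_point_between_general
    (FX FY FZ : ℝ → ℝ)
    (dXY dXZ dYZ : ℝ)
    (hXY : IsUniqueCrossPt FX FY dXY)
    (hXZ : IsUniqueCrossPt FX FZ dXZ)
    (hYZ : IsUniqueCrossPt FY FZ dYZ) :
    min dXY dYZ ≤ dXZ ∧ dXZ ≤ max dXY dYZ := by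
  constructor
  · refine hXZ.le_of_forall_Ioo_le fun x hx => ?_
    obtain ⟨hxXY, hxYZ⟩ := le_min_iff.1 hx.2.le
    exact (hXY.1.1 x hxXY).trans (hYZ.1.1 x hxYZ)
  · refine hXZ.le_of_forall_Ioo_ge fun x hx => ?_
    obtain ⟨hxXY, hxYZ⟩ := max_le_iff.1 hx.1.le
    exact (hYZ.1.2 x hxYZ).trans (hXY.1.2 x hxXY)

/-- Under the convex-order setup with unique pairwise crossing points,
`d_XZ` lies weakly between `d_XY` and `d_YZ`. -/
theorem crossing_point_between {Ω : Type*} [MeasureSpace Ω]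
    (hP : IsProbabilityMeasure (ℙ : Measure Ω))
    (X Y Z : Ω → ℝ) (hXm : Measurable X) (hYm : Measurable Y) (hZm : Measurable Z)
    (hXi : Integrable X) (hYi : Integrable Y) (hZi : Integrable Z)
    (FX FY FZ : ℝ → ℝ)
    (hFX : ∀ x, FX x = cdf ((ℙ : Measure Ω).map X) x)
    (hFY : ∀ x, FY x = cdf ((ℙ : Measure Ω).map Y) x)
    (hFZ : ∀ x, FZ x = cdf ((ℙ : Measure Ω).map Z) x)
    (hXs : StrictMono FX) (hXc : Continuous FX)
    (hYs : StrictMono FY) (hYc : Continuous FY)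
    (hZs : StrictMono FZ) (hZc : Continuous FZ)
    (hne₁ : FX ≠ FY) (hne₂ : FX ≠ FZ) (hne₃ : FY ≠ FZ)
    (hmeanXY : (∫ ω, X ω) = ∫ ω, Y ω)
    (hslXY : ∀ x : ℝ, (∫ ω, max (X ω - x) 0) ≤ ∫ ω, max (Y ω - x) 0)
    (hmeanYZ : (∫ ω, Y ω) = ∫ ω, Z ω)
    (hslYZ : ∀ x : ℝ, (∫ ω, max (Y ω - x) 0) ≤ ∫ ω, max (Z ω - x) 0)
    (dXY dXZ dYZ : ℝ)
    (hXY : IsUniqueCrossPt FX FY dXY)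
    (hXZ : IsUniqueCrossPt FX FZ dXZ)
    (hYZ : IsUniqueCrossPt FY FZ dYZ) :
    min dXY dYZ ≤ dXZ ∧ dXZ ≤ max dXY dYZ :=
  crossing_point_between_general FX FY FZ dXY dXZ dYZ hXY hXZ hYZ
end

section
/- Let I_1 and I_2 be integrable real random variables with strictly increasing continuous cdfs such that I_2 ≼_DISP I_1. Then every real number d satisfying F_{I^c}(d) = F_{I^{cm}}(d), where I^c and I^{cm} are the comonotonic and countermonotonic differences, satisfies F_{I^{cm}}(d) = 1/2; consequently d = F_{I_1}^{-1}(1/2) − F_{I_2}^{-1}(1/2). -/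
/-!
Write `Q₁`, `Q₂` for the quantile functions, `g p = Q₁ p - Q₂ p` and `h p = Q₁ p - Q₂ (1 - p)`.
Since `U` is uniform on `(0, 1)`, `F_{I^c}(d)` and `F_{I^{cm}}(d)` are the Lebesgue measures of the
sublevel sets `{g ≤ d}` and `{h ≤ d}` in `(0, 1)`. Both `g` (by the dispersive order) and `h` are
nondecreasing and continuous on `(0, 1)`, so such a sublevel set is an initial segment of `(0, 1)`
and, when its length `α` lies strictly between `0` and `1`, the function takes the value `d` at `α`.
For `h` this is the case because `Q₁` runs through all of `ℝ`. If the two lengths agree, then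
`g α = h α = d`, i.e. `Q₂ α = Q₂ (1 - α)`, and injectivity of `Q₂` forces `α = 1/2`.
-/

open MeasureTheory ProbabilityTheory Set Filter Topology

section Quantile

variable {F Q : ℝ → ℝ}

lemma strictMonoOn_of_rightInvOn (hF : Monotone F) (hQ : ∀ p ∈ Ioo (0 : ℝ) 1, F (Q p) = p) :
    StrictMonoOn Q (Ioo 0 1) := by
  intro p hp q hq hpq
  by_contra! hle
  have := hF hle
  rw [hQ p hp, hQ q hq] at this
  linarith

lemma surjOn_of_rightInvOn (hF : StrictMono F) (hFrange : ∀ x, F x ∈ Ioo (0 : ℝ) 1)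
    (hQ : ∀ p ∈ Ioo (0 : ℝ) 1, F (Q p) = p) : SurjOn Q (Ioo 0 1) univ :=
  fun x _ => ⟨F x, hFrange x, hF.injective (hQ _ (hFrange x))⟩

lemma continuousOn_of_rightInvOn (hF : StrictMono F) (hFrange : ∀ x, F x ∈ Ioo (0 : ℝ) 1)
    (hQ : ∀ p ∈ Ioo (0 : ℝ) 1, F (Q p) = p) : ContinuousOn Q (Ioo 0 1) := by
  have hsurj : Q '' Ioo 0 1 = univ :=
    (surjOn_of_rightInvOn hF hFrange hQ).image_eq_of_mapsTo (mapsTo_univ _ _)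
  intro p hp
  refine (continuousAt_of_monotoneOn_of_image_mem_nhds
    (strictMonoOn_of_rightInvOn hF.monotone hQ).monotoneOn (isOpen_Ioo.mem_nhds hp)
    ?_).continuousWithinAt
  rw [hsurj]
  exact univ_mem

end Quantile

lemma cdf_mem_Ioo_of_strictMono {μ : Measure ℝ} (h : StrictMono (cdf μ)) (x : ℝ) :
    cdf μ x ∈ Ioo 0 1 :=
  ⟨(cdf_nonneg μ (x - 1)).trans_lt (h (sub_one_lt x)),
    (h (lt_add_one x)).trans_le (cdf_le_one μ _)⟩

section Reflection

variable {f g : ℝ → ℝ}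

lemma one_sub_mem_Ioo {p : ℝ} (hp : p ∈ Ioo (0 : ℝ) 1) : 1 - p ∈ Ioo (0 : ℝ) 1 :=
  ⟨by linarith [hp.2], by linarith [hp.1]⟩

lemma monotoneOn_sub_comp_one_sub (hf : MonotoneOn f (Ioo 0 1)) (hg : MonotoneOn g (Ioo 0 1)) :
    MonotoneOn (fun p => f p - g (1 - p)) (Ioo 0 1) := by
  intro p hp q hq hpq
  have := hg (one_sub_mem_Ioo hq) (one_sub_mem_Ioo hp) (by linarith)
  linarith [hf hp hq hpq]

lemma continuousOn_sub_comp_one_sub (hf : ContinuousOn f (Ioo 0 1))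
    (hg : ContinuousOn g (Ioo 0 1)) : ContinuousOn (fun p => f p - g (1 - p)) (Ioo 0 1) :=
  hf.sub (hg.comp (continuousOn_const.sub continuousOn_id) fun _ => one_sub_mem_Ioo)

lemma exists_sub_comp_one_sub_le (hf : MonotoneOn f (Ioo 0 1)) (hfs : SurjOn f (Ioo 0 1) univ)
    (hg : MonotoneOn g (Ioo 0 1)) (d : ℝ) : ∃ p ∈ Ioo (0 : ℝ) 1, f p - g (1 - p) ≤ d := by
  obtain ⟨p, hp, hfp⟩ := hfs (mem_univ (d + g (1 / 2)))
  have hq_half := min_le_right p (1 / 2)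
  have hq : min p (1 / 2) ∈ Ioo (0 : ℝ) 1 := ⟨lt_min hp.1 (by norm_num), by linarith⟩
  refine ⟨min p (1 / 2), hq, ?_⟩
  have hf_le := hf hq hp (min_le_left _ _)
  have hg_ge := hg (by norm_num : (1 / 2 : ℝ) ∈ Ioo 0 1) (one_sub_mem_Ioo hq) (by linarith)
  linarith

lemma exists_lt_sub_comp_one_sub (hf : MonotoneOn f (Ioo 0 1)) (hfs : SurjOn f (Ioo 0 1) univ)
    (hg : MonotoneOn g (Ioo 0 1)) (d : ℝ) : ∃ p ∈ Ioo (0 : ℝ) 1, d < f p - g (1 - p) := by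
  obtain ⟨p, hp, hfp⟩ := hfs (mem_univ (d + 1 + g (1 / 2)))
  have hq_half := le_max_right p (1 / 2)
  have hq : max p (1 / 2) ∈ Ioo (0 : ℝ) 1 := ⟨by linarith, max_lt hp.2 (by norm_num)⟩
  refine ⟨max p (1 / 2), hq, ?_⟩
  have hf_ge := hf hp hq (le_max_left _ _)
  have hg_le := hg (one_sub_mem_Ioo hq) (by norm_num : (1 / 2 : ℝ) ∈ Ioo 0 1) (by linarith)
  linarith

end Reflection

section Sublevel

variable {f : ℝ → ℝ} {d p : ℝ}

lemma le_of_lt_volume_real_sublevel (hf : MonotoneOn f (Ioo 0 1)) (hp : p ∈ Ioo (0 : ℝ) 1)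
    (hpα : p < volume.real (f ⁻¹' Iic d ∩ Ioo 0 1)) : f p ≤ d := by
  by_contra! hfp
  have hsub : f ⁻¹' Iic d ∩ Ioo 0 1 ⊆ Ioo 0 p := fun q ⟨hqd, hq⟩ =>
    ⟨hq.1, lt_of_not_ge fun hpq => (hfp.trans_le (hf hp hq hpq)).not_ge hqd⟩
  have := measureReal_mono (μ := volume) hsub (by simp)
  rw [Real.volume_real_Ioo_of_le hp.1.le, sub_zero] at this
  linarith

lemma lt_of_volume_real_sublevel_lt (hf : MonotoneOn f (Ioo 0 1)) (hp : p ∈ Ioo (0 : ℝ) 1)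
    (hαp : volume.real (f ⁻¹' Iic d ∩ Ioo 0 1) < p) : d < f p := by
  by_contra! hfp
  have hsub : Ioo 0 p ⊆ f ⁻¹' Iic d ∩ Ioo 0 1 := fun q hq =>
    have hq' : q ∈ Ioo (0 : ℝ) 1 := ⟨hq.1, hq.2.trans hp.2⟩
    ⟨(hf hq' hp hq.2.le).trans hfp, hq'⟩
  have := measureReal_mono (μ := volume) hsub
    (measure_ne_top_of_subset inter_subset_right (by simp))
  rw [Real.volume_real_Ioo_of_le hp.1.le, sub_zero] at this
  linarith

lemma volume_real_sublevel_mem_Ioo (hf : MonotoneOn f (Ioo 0 1))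
    (hle : ∃ p ∈ Ioo (0 : ℝ) 1, f p ≤ d) (hlt : ∃ p ∈ Ioo (0 : ℝ) 1, d < f p) :
    volume.real (f ⁻¹' Iic d ∩ Ioo 0 1) ∈ Ioo (0 : ℝ) 1 := by
  obtain ⟨p, hp, hpd⟩ := hle
  obtain ⟨q, hq, hqd⟩ := hlt
  constructor
  · by_contra! hα
    exact (lt_of_volume_real_sublevel_lt hf hp (hα.trans_lt hp.1)).not_ge hpd
  · by_contra! hα
    exact (le_of_lt_volume_real_sublevel hf hq (hq.2.trans_le hα)).not_gt hqd

lemma apply_volume_real_sublevel_eq (hf : MonotoneOn f (Ioo 0 1)) (hfc : ContinuousOn f (Ioo 0 1))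
    (hα : volume.real (f ⁻¹' Iic d ∩ Ioo 0 1) ∈ Ioo (0 : ℝ) 1) :
    f (volume.real (f ⁻¹' Iic d ∩ Ioo 0 1)) = d := by
  set α := volume.real (f ⁻¹' Iic d ∩ Ioo 0 1)
  have hcont : Tendsto f (𝓝 α) (𝓝 (f α)) := (hfc.continuousAt (isOpen_Ioo.mem_nhds hα)).tendsto
  apply le_antisymm
  · refine le_of_tendsto (hcont.mono_left (nhdsWithin_le_nhds (s := Iio α))) ?_
    filter_upwards [Ioo_mem_nhdsLT hα.1] with p hp
    exact le_of_lt_volume_real_sublevel hf ⟨hp.1, hp.2.trans hα.2⟩ hp.2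
  · refine ge_of_tendsto (hcont.mono_left (nhdsWithin_le_nhds (s := Ioi α))) ?_
    filter_upwards [Ioo_mem_nhdsGT hα.2] with p hp
    exact (lt_of_volume_real_sublevel_lt hf ⟨hα.1.trans hp.1, hp.2⟩ hp.1).le

end Sublevel

lemma cdf_map_comp_of_map_eq {Ω : Type*} [MeasurableSpace Ω] {μ : Measure Ω} {U : Ω → ℝ}
    (hUm : Measurable U) (hU : μ.map U = volume.restrict (Ioo 0 1)) {f : ℝ → ℝ}
    (hf : Measurable f) (x : ℝ) :
    cdf (μ.map fun ω => f (U ω)) x = volume.real (f ⁻¹' Iic x ∩ Ioo 0 1) := by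
  have : IsProbabilityMeasure (volume.restrict (Ioo (0 : ℝ) 1)) := ⟨by simp⟩
  have : IsProbabilityMeasure ((volume.restrict (Ioo (0 : ℝ) 1)).map f) :=
    Measure.isProbabilityMeasure_map hf.aemeasurable
  rw [← Function.comp_def, ← Measure.map_map hf hUm, hU, cdf_eq_real,
    map_measureReal_apply hf measurableSet_Iic, measureReal_restrict_apply (hf measurableSet_Iic)]

theorem dispersive_crossing_level_half_general {Ω : Type*} [MeasureSpace Ω]
    (I₁ I₂ : Ω → ℝ)
    (h₁s : StrictMono fun x => cdf ((ℙ : Measure Ω).map I₁) x)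
    (h₂s : StrictMono fun x => cdf ((ℙ : Measure Ω).map I₂) x)
    (Finv₁ Finv₂ : ℝ → ℝ) (hFinv₁m : Measurable Finv₁) (hFinv₂m : Measurable Finv₂)
    (hFinv₁ : ∀ p ∈ Set.Ioo (0 : ℝ) 1, cdf ((ℙ : Measure Ω).map I₁) (Finv₁ p) = p)
    (hFinv₂ : ∀ p ∈ Set.Ioo (0 : ℝ) 1, cdf ((ℙ : Measure Ω).map I₂) (Finv₂ p) = p)
    (hdisp : MonotoneOn (fun p => Finv₁ p - Finv₂ p) (Set.Ioo (0 : ℝ) 1))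
    (U : Ω → ℝ) (hUm : Measurable U)
    (hU : (ℙ : Measure Ω).map U = volume.restrict (Set.Ioo (0 : ℝ) 1))
    (Fc Fcm : ℝ → ℝ)
    (hFc : Fc = fun x =>
      cdf ((ℙ : Measure Ω).map fun ω => Finv₁ (U ω) - Finv₂ (U ω)) x)
    (hFcm : Fcm = fun x =>
      cdf ((ℙ : Measure Ω).map fun ω => Finv₁ (U ω) - Finv₂ (1 - U ω)) x)
    (d : ℝ) (hd : Fc d = Fcm d) :
    Fcm d = 1 / 2 ∧ d = Finv₁ (1 / 2) - Finv₂ (1 / 2) := by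
  have hQ₁ := strictMonoOn_of_rightInvOn h₁s.monotone hFinv₁
  have hQ₂ := strictMonoOn_of_rightInvOn h₂s.monotone hFinv₂
  have hQ₁c := continuousOn_of_rightInvOn h₁s (cdf_mem_Ioo_of_strictMono h₁s) hFinv₁
  have hQ₂c := continuousOn_of_rightInvOn h₂s (cdf_mem_Ioo_of_strictMono h₂s) hFinv₂
  have hQ₁s := surjOn_of_rightInvOn h₁s (cdf_mem_Ioo_of_strictMono h₁s) hFinv₁
  have hcm := monotoneOn_sub_comp_one_sub hQ₁.monotoneOn hQ₂.monotoneOn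
  have hFc_eq : Fc d = volume.real ((fun p => Finv₁ p - Finv₂ p) ⁻¹' Iic d ∩ Ioo 0 1) := by
    rw [hFc]
    exact cdf_map_comp_of_map_eq hUm hU (hFinv₁m.sub hFinv₂m) d
  have hFcm_eq :
      Fcm d = volume.real ((fun p => Finv₁ p - Finv₂ (1 - p)) ⁻¹' Iic d ∩ Ioo 0 1) := by
    rw [hFcm]
    exact cdf_map_comp_of_map_eq hUm hU
      (hFinv₁m.sub (hFinv₂m.comp (measurable_const.sub measurable_id))) d
  have hα : Fcm d ∈ Ioo 0 1 := by
    rw [hFcm_eq]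
    exact volume_real_sublevel_mem_Ioo hcm
      (exists_sub_comp_one_sub_le hQ₁.monotoneOn hQ₁s hQ₂.monotoneOn d)
      (exists_lt_sub_comp_one_sub hQ₁.monotoneOn hQ₁s hQ₂.monotoneOn d)
  have hcm_α : Finv₁ (Fcm d) - Finv₂ (1 - Fcm d) = d := by
    rw [hFcm_eq] at hα ⊢
    exact apply_volume_real_sublevel_eq hcm (continuousOn_sub_comp_one_sub hQ₁c hQ₂c) hα
  have hc_α : Finv₁ (Fcm d) - Finv₂ (Fcm d) = d := by
    rw [← hd, hFc_eq] at hα ⊢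
    exact apply_volume_real_sublevel_eq hdisp (hQ₁c.sub hQ₂c) hα
  have hhalf : Fcm d = 1 / 2 := by
    have := hQ₂.injOn (one_sub_mem_Ioo hα) hα (by linarith)
    linarith
  exact ⟨hhalf, by rw [hhalf] at hc_α; linarith⟩

/-- If `I₂ ≼_DISP I₁`, then every real `d` with
`F_{I^c}(d) = F_{I^{cm}}(d)` satisfies `F_{I^{cm}}(d) = 1/2`, and consequently
`d = F_{I₁}⁻¹(1/2) - F_{I₂}⁻¹(1/2)`. -/
theorem dispersive_crossing_level_half {Ω : Type*} [MeasureSpace Ω]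
    (hP : IsProbabilityMeasure (ℙ : Measure Ω))
    (I₁ I₂ : Ω → ℝ) (h₁m : Measurable I₁) (h₂m : Measurable I₂)
    (h₁i : Integrable I₁) (h₂i : Integrable I₂)
    (h₁s : StrictMono fun x => cdf ((ℙ : Measure Ω).map I₁) x)
    (h₁c : Continuous fun x => cdf ((ℙ : Measure Ω).map I₁) x)
    (h₂s : StrictMono fun x => cdf ((ℙ : Measure Ω).map I₂) x)
    (h₂c : Continuous fun x => cdf ((ℙ : Measure Ω).map I₂) x)
    (Finv₁ Finv₂ : ℝ → ℝ) (hFinv₁m : Measurable Finv₁) (hFinv₂m : Measurable Finv₂)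
    (hFinv₁ : ∀ p ∈ Set.Ioo (0 : ℝ) 1, cdf ((ℙ : Measure Ω).map I₁) (Finv₁ p) = p)
    (hFinv₂ : ∀ p ∈ Set.Ioo (0 : ℝ) 1, cdf ((ℙ : Measure Ω).map I₂) (Finv₂ p) = p)
    (hdisp : MonotoneOn (fun p => Finv₁ p - Finv₂ p) (Set.Ioo (0 : ℝ) 1))
    (U : Ω → ℝ) (hUm : Measurable U)
    (hU : (ℙ : Measure Ω).map U = volume.restrict (Set.Ioo (0 : ℝ) 1))
    (Fc Fcm : ℝ → ℝ)
    (hFc : Fc = fun x =>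
      cdf ((ℙ : Measure Ω).map fun ω => Finv₁ (U ω) - Finv₂ (U ω)) x)
    (hFcm : Fcm = fun x =>
      cdf ((ℙ : Measure Ω).map fun ω => Finv₁ (U ω) - Finv₂ (1 - U ω)) x)
    (d : ℝ) (hd : Fc d = Fcm d) :
    Fcm d = 1 / 2 ∧ d = Finv₁ (1 / 2) - Finv₂ (1 / 2) :=
  dispersive_crossing_level_half_general I₁ I₂ h₁s h₂s Finv₁ Finv₂ hFinv₁m hFinv₂m hFinv₁ hFinv₂
    hdisp U hUm hU Fc Fcm hFc hFcm d hd
end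

section
/- Let X, Y and Z be integrable real random variables with strictly increasing continuous cdfs such that X ≼_cx Y ≼_cx Z, and suppose d_XY is the unique crossing point of (F_X, F_Y) and d_YZ is the unique crossing point of (F_Y, F_Z). If max{d_XY, d_YZ} ≤ δ < ε, then E[r(X)] ≤ E[r(Y)] ≤ E[r(Z)], where r(x) = (x−δ)_+ − (x−ε)_+. -/
/-!
Write `r = callSpread δ ε`. By the layer-cake formula `E[r(X)] = ∫_{t>0} P(r(X) > t) dt`, and for
`0 < t < ε - δ` the event `{r(X) > t}` is `{X > δ + t}`, while it is empty for `t ≥ ε - δ`. Above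
both crossing points the cdfs are ordered `F_Z ≤ F_Y ≤ F_X`, so these tail probabilities increase
from `X` to `Y` to `Z`.
-/

open MeasureTheory ProbabilityTheory

theorem integral_le_integral_of_forall_measure_lt_le {α : Type*} [MeasurableSpace α]
    {μ : Measure α} {f g : α → ℝ} (hf : 0 ≤ f) (hfm : AEMeasurable f μ) (hg : 0 ≤ g)
    (hgi : Integrable g μ) (h : ∀ t > 0, μ {a | t < f a} ≤ μ {a | t < g a}) :
    ∫ a, f a ∂μ ≤ ∫ a, g a ∂μ := by
  rw [integral_eq_lintegral_of_nonneg_ae (ae_of_all _ hf) hfm.aestronglyMeasurable,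
    integral_eq_lintegral_of_nonneg_ae (ae_of_all _ hg) hgi.aestronglyMeasurable]
  refine ENNReal.toReal_mono hgi.lintegral_lt_top.ne ?_
  rw [lintegral_eq_lintegral_meas_lt μ (ae_of_all _ hf) hfm,
    lintegral_eq_lintegral_meas_lt μ (ae_of_all _ hg) hgi.aemeasurable]
  exact setLIntegral_mono' measurableSet_Ioi h

section tail

variable {Ω : Type*} [MeasurableSpace Ω] {μ : Measure Ω} [IsProbabilityMeasure μ]

theorem measure_preimage_Ioi_eq_one_sub_cdf {X : Ω → ℝ} (hX : Measurable X) (s : ℝ) :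
    μ (X ⁻¹' Set.Ioi s) = 1 - ENNReal.ofReal (cdf (μ.map X) s) := by
  have := Measure.isProbabilityMeasure_map (μ := μ) hX.aemeasurable
  rw [ofReal_cdf, Measure.map_apply hX measurableSet_Iic,
    ← prob_compl_eq_one_sub (hX measurableSet_Iic), ← Set.preimage_compl, Set.compl_Iic]

theorem measure_preimage_Ioi_le_of_cdf_le {X Y : Ω → ℝ} (hX : Measurable X) (hY : Measurable Y)
    {s : ℝ} (h : cdf (μ.map Y) s ≤ cdf (μ.map X) s) :
    μ (X ⁻¹' Set.Ioi s) ≤ μ (Y ⁻¹' Set.Ioi s) := by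
  rw [measure_preimage_Ioi_eq_one_sub_cdf hX, measure_preimage_Ioi_eq_one_sub_cdf hY]
  exact tsub_le_tsub_left (ENNReal.ofReal_le_ofReal h) 1

end tail

def callSpread (δ ε x : ℝ) : ℝ := max (x - δ) 0 - max (x - ε) 0

section callSpread

variable {δ ε : ℝ}

@[fun_prop]
theorem continuous_callSpread : Continuous (callSpread δ ε) := by
  unfold callSpread
  fun_prop

theorem callSpread_nonneg (hδε : δ ≤ ε) (x : ℝ) : 0 ≤ callSpread δ ε x := by
  unfold callSpread
  grind

theorem abs_callSpread_le (hδε : δ ≤ ε) (x : ℝ) : |callSpread δ ε x| ≤ ε - δ := by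
  unfold callSpread
  grind

theorem lt_callSpread_iff {t : ℝ} (ht : 0 < t) (x : ℝ) :
    t < callSpread δ ε x ↔ t < ε - δ ∧ δ + t < x := by
  unfold callSpread
  grind

theorem integral_callSpread_le_of_cdf_le {Ω : Type*} [MeasurableSpace Ω] {μ : Measure Ω}
    [IsProbabilityMeasure μ] {X Y : Ω → ℝ} (hX : Measurable X) (hY : Measurable Y)
    (hδε : δ ≤ ε) (h : ∀ s ≥ δ, cdf (μ.map Y) s ≤ cdf (μ.map X) s) :
    ∫ ω, callSpread δ ε (X ω) ∂μ ≤ ∫ ω, callSpread δ ε (Y ω) ∂μ := by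
  refine integral_le_integral_of_forall_measure_lt_le (fun ω => callSpread_nonneg hδε _)
    (by fun_prop) (fun ω => callSpread_nonneg hδε _)
    (.of_bound (by fun_prop) _ (ae_of_all _ fun ω => abs_callSpread_le hδε _)) fun t ht => ?_
  simp only [lt_callSpread_iff ht]
  by_cases hte : t < ε - δ
  · simp only [hte, true_and]
    exact measure_preimage_Ioi_le_of_cdf_le hX hY (h _ (by linarith))
  · simp only [hte, false_and, Set.ofPred_false, le_refl]

end callSpread

theorem payoff_order_above_crossings_general {Ω : Type*} [MeasureSpace Ω]
    (hP : IsProbabilityMeasure (ℙ : Measure Ω))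
    (X Y Z : Ω → ℝ) (hXm : Measurable X) (hYm : Measurable Y) (hZm : Measurable Z)
    (FX FY FZ : ℝ → ℝ)
    (hFX : ∀ x, FX x = cdf ((ℙ : Measure Ω).map X) x)
    (hFY : ∀ x, FY x = cdf ((ℙ : Measure Ω).map Y) x)
    (hFZ : ∀ x, FZ x = cdf ((ℙ : Measure Ω).map Z) x)
    (dXY dYZ : ℝ)
    (hXY : IsCrossPt FX FY dXY ∧ ∀ d', IsCrossPt FX FY d' → d' = dXY)
    (hYZ : IsCrossPt FY FZ dYZ ∧ ∀ d', IsCrossPt FY FZ d' → d' = dYZ)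
    (δ ε : ℝ) (hδ : max dXY dYZ ≤ δ) (hδε : δ < ε) :
    (∫ ω, (max (X ω - δ) 0 - max (X ω - ε) 0)) ≤
        (∫ ω, (max (Y ω - δ) 0 - max (Y ω - ε) 0)) ∧
      (∫ ω, (max (Y ω - δ) 0 - max (Y ω - ε) 0)) ≤
        ∫ ω, (max (Z ω - δ) 0 - max (Z ω - ε) 0) := by
  have hXY_above : ∀ s ≥ δ, FY s ≤ FX s := fun s hs =>
    hXY.1.2 s ((le_max_left _ _).trans (hδ.trans hs))
  have hYZ_above : ∀ s ≥ δ, FZ s ≤ FY s := fun s hs =>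
    hYZ.1.2 s ((le_max_right _ _).trans (hδ.trans hs))
  simp only [hFX, hFY, hFZ] at hXY_above hYZ_above
  exact ⟨integral_callSpread_le_of_cdf_le hXm hYm hδε.le hXY_above,
    integral_callSpread_le_of_cdf_le hYm hZm hδε.le hYZ_above⟩

/-- If `X ≼_cx Y ≼_cx Z` have strictly increasing continuous cdfs with
unique crossing points `d_XY` of `(F_X, F_Y)` and `d_YZ` of `(F_Y, F_Z)`, and
`max {d_XY, d_YZ} ≤ δ < ε`, then `E[r(X)] ≤ E[r(Y)] ≤ E[r(Z)]` for
`r(x) = (x-δ)₊ - (x-ε)₊`. -/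
theorem payoff_order_above_crossings {Ω : Type*} [MeasureSpace Ω]
    (hP : IsProbabilityMeasure (ℙ : Measure Ω))
    (X Y Z : Ω → ℝ) (hXm : Measurable X) (hYm : Measurable Y) (hZm : Measurable Z)
    (hXi : Integrable X) (hYi : Integrable Y) (hZi : Integrable Z)
    (FX FY FZ : ℝ → ℝ)
    (hFX : ∀ x, FX x = cdf ((ℙ : Measure Ω).map X) x)
    (hFY : ∀ x, FY x = cdf ((ℙ : Measure Ω).map Y) x)
    (hFZ : ∀ x, FZ x = cdf ((ℙ : Measure Ω).map Z) x)
    (hXs : StrictMono FX) (hXc : Continuous FX)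
    (hYs : StrictMono FY) (hYc : Continuous FY)
    (hZs : StrictMono FZ) (hZc : Continuous FZ)
    (hmeanXY : (∫ ω, X ω) = ∫ ω, Y ω)
    (hslXY : ∀ x : ℝ, (∫ ω, max (X ω - x) 0) ≤ ∫ ω, max (Y ω - x) 0)
    (hmeanYZ : (∫ ω, Y ω) = ∫ ω, Z ω)
    (hslYZ : ∀ x : ℝ, (∫ ω, max (Y ω - x) 0) ≤ ∫ ω, max (Z ω - x) 0)
    (dXY dYZ : ℝ)
    (hXY : IsCrossPt FX FY dXY ∧ ∀ d', IsCrossPt FX FY d' → d' = dXY)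
    (hYZ : IsCrossPt FY FZ dYZ ∧ ∀ d', IsCrossPt FY FZ d' → d' = dYZ)
    (δ ε : ℝ) (hδ : max dXY dYZ ≤ δ) (hδε : δ < ε) :
    (∫ ω, (max (X ω - δ) 0 - max (X ω - ε) 0)) ≤
        (∫ ω, (max (Y ω - δ) 0 - max (Y ω - ε) 0)) ∧
      (∫ ω, (max (Y ω - δ) 0 - max (Y ω - ε) 0)) ≤
        ∫ ω, (max (Z ω - δ) 0 - max (Z ω - ε) 0) :=
  payoff_order_above_crossings_general hP X Y Z hXm hYm hZm FX FY FZ hFX hFY hFZ dXY dYZ hXY hYZ δ ε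
    hδ hδε
end

section
/- Let X, Y and Z be integrable real random variables with strictly increasing continuous cdfs such that X ≼_cx Y ≼_cx Z, and suppose d_XY is the unique crossing point of (F_X, F_Y) and d_YZ is the unique crossing point of (F_Y, F_Z). If δ < ε ≤ min{d_XY, d_YZ}, then E[r(Z)] ≤ E[r(Y)] ≤ E[r(X)], where r(x) = (x−δ)_+ − (x−ε)_+. -/
/-!
The payoff `r` of the spread is nondecreasing and saturates at `ε - δ`, and by the layer-cake
formula `E[r(V)] = ∫_δ^ε P(V > s) ds`. Below both crossing points the cdfs are ordered,
`F_X ≤ F_Y ≤ F_Z`, so the tails satisfy `P(Z > s) ≤ P(Y > s) ≤ P(X > s)` on `[δ, ε]`, and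
integrating over `s` orders the expected payoffs.
-/

open MeasureTheory ProbabilityTheory

/-- The payoff `r` of the statement: a bull call spread with strikes `δ` and `ε`. -/
def bullSpread (δ ε x : ℝ) : ℝ := max (x - δ) 0 - max (x - ε) 0

section BullSpread

variable {δ ε : ℝ}

theorem measurable_bullSpread : Measurable (bullSpread δ ε) := by
  unfold bullSpread; fun_prop

theorem bullSpread_nonneg (hδε : δ ≤ ε) (x : ℝ) : 0 ≤ bullSpread δ ε x := by
  unfold bullSpread
  have : max (x - ε) 0 ≤ max (x - δ) 0 := max_le_max (by linarith) le_rfl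
  linarith

theorem bullSpread_le_sub (hδε : δ ≤ ε) (x : ℝ) : bullSpread δ ε x ≤ ε - δ := by
  unfold bullSpread
  rcases le_total x δ with hxδ | hδx <;> rcases le_total x ε with hxε | hεx <;>
    simp only [max_eq_left, max_eq_right, sub_nonpos, sub_nonneg, *] <;> linarith

theorem lt_bullSpread_iff {t : ℝ} (ht : 0 < t) (x : ℝ) :
    t < bullSpread δ ε x ↔ δ + t < x ∧ t < ε - δ := by
  unfold bullSpread
  rcases le_total x δ with hxδ | hδx <;> rcases le_total x ε with hxε | hεx <;>
    simp only [max_eq_left, max_eq_right, sub_nonpos, sub_nonneg, *] <;>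
    constructor <;> intros <;> (try constructor) <;> linarith

end BullSpread

section TailComparison

variable {Ω : Type*} [MeasurableSpace Ω] {μ : Measure Ω} {V W : Ω → ℝ} {δ ε : ℝ}

theorem measure_lt_eq_one_sub_cdf_map [IsProbabilityMeasure μ] (hV : AEMeasurable V μ) (s : ℝ) :
    μ {ω | s < V ω} = 1 - ENNReal.ofReal (cdf (μ.map V) s) := by
  have := Measure.isProbabilityMeasure_map hV
  rw [ofReal_cdf, ← prob_compl_eq_one_sub measurableSet_Iic, Set.compl_Iic,
    Measure.map_apply_of_aemeasurable hV measurableSet_Ioi]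
  rfl

theorem measure_lt_le_of_cdf_map_le [IsProbabilityMeasure μ] (hV : AEMeasurable V μ)
    (hW : AEMeasurable W μ) {s : ℝ} (h : cdf (μ.map W) s ≤ cdf (μ.map V) s) :
    μ {ω | s < V ω} ≤ μ {ω | s < W ω} := by
  rw [measure_lt_eq_one_sub_cdf_map hV, measure_lt_eq_one_sub_cdf_map hW]
  exact tsub_le_tsub_left (ENNReal.ofReal_le_ofReal h) 1

theorem lintegral_bullSpread_comp_le (hδε : δ ≤ ε) (hV : AEMeasurable V μ) (hW : AEMeasurable W μ)
    (h : ∀ s ∈ Set.Ioo δ ε, μ {ω | s < V ω} ≤ μ {ω | s < W ω}) :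
    ∫⁻ ω, ENNReal.ofReal (bullSpread δ ε (V ω)) ∂μ ≤
      ∫⁻ ω, ENNReal.ofReal (bullSpread δ ε (W ω)) ∂μ := by
  rw [lintegral_eq_lintegral_meas_lt μ (.of_forall fun ω => bullSpread_nonneg hδε (V ω))
      (measurable_bullSpread.comp_aemeasurable hV),
    lintegral_eq_lintegral_meas_lt μ (.of_forall fun ω => bullSpread_nonneg hδε (W ω))
      (measurable_bullSpread.comp_aemeasurable hW)]
  refine setLIntegral_mono' measurableSet_Ioi fun t (ht : 0 < t) => ?_
  simp only [lt_bullSpread_iff ht]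
  by_cases htε : t < ε - δ
  · simpa only [htε, and_true] using h (δ + t) ⟨by linarith, by linarith⟩
  · simp only [htε, and_false, Set.ofPred_false, measure_empty, zero_le]

theorem integral_bullSpread_comp_le [IsFiniteMeasure μ] (hδε : δ ≤ ε)
    (hV : AEMeasurable V μ) (hW : AEMeasurable W μ)
    (h : ∀ s ∈ Set.Ioo δ ε, μ {ω | s < V ω} ≤ μ {ω | s < W ω}) :
    ∫ ω, bullSpread δ ε (V ω) ∂μ ≤ ∫ ω, bullSpread δ ε (W ω) ∂μ := by
  have hfin : ∫⁻ ω, ENNReal.ofReal (bullSpread δ ε (W ω)) ∂μ ≠ ⊤ :=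
    (IsFiniteMeasure.lintegral_lt_top_of_bounded_to_ennreal μ
      ⟨(ε - δ).toNNReal, fun ω => ENNReal.ofReal_le_ofReal (bullSpread_le_sub hδε _)⟩).ne
  rw [integral_eq_lintegral_of_nonneg_ae (.of_forall fun ω => bullSpread_nonneg hδε (V ω))
      (measurable_bullSpread.comp_aemeasurable hV).aestronglyMeasurable,
    integral_eq_lintegral_of_nonneg_ae (.of_forall fun ω => bullSpread_nonneg hδε (W ω))
      (measurable_bullSpread.comp_aemeasurable hW).aestronglyMeasurable]
  exact ENNReal.toReal_mono hfin (lintegral_bullSpread_comp_le hδε hV hW h)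

end TailComparison

theorem payoff_order_below_crossings_general {Ω : Type*} [MeasureSpace Ω]
    (hP : IsProbabilityMeasure (ℙ : Measure Ω))
    (X Y Z : Ω → ℝ) (hXm : Measurable X) (hYm : Measurable Y) (hZm : Measurable Z)
    (FX FY FZ : ℝ → ℝ)
    (hFX : ∀ x, FX x = cdf ((ℙ : Measure Ω).map X) x)
    (hFY : ∀ x, FY x = cdf ((ℙ : Measure Ω).map Y) x)
    (hFZ : ∀ x, FZ x = cdf ((ℙ : Measure Ω).map Z) x)
    (dXY dYZ : ℝ)
    (hXY : IsCrossPt FX FY dXY ∧ ∀ d', IsCrossPt FX FY d' → d' = dXY)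
    (hYZ : IsCrossPt FY FZ dYZ ∧ ∀ d', IsCrossPt FY FZ d' → d' = dYZ)
    (δ ε : ℝ) (hδε : δ < ε) (hε : ε ≤ min dXY dYZ) :
    (∫ ω, (max (Z ω - δ) 0 - max (Z ω - ε) 0)) ≤
        (∫ ω, (max (Y ω - δ) 0 - max (Y ω - ε) 0)) ∧
      (∫ ω, (max (Y ω - δ) 0 - max (Y ω - ε) 0)) ≤
        ∫ ω, (max (X ω - δ) 0 - max (X ω - ε) 0) := by
  have hε_XY := hε.trans (min_le_left dXY dYZ)
  have hε_YZ := hε.trans (min_le_right dXY dYZ)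
  have tail_ZY : ∀ s ∈ Set.Ioo δ ε, ℙ {ω | s < Z ω} ≤ ℙ {ω | s < Y ω} := fun s hs =>
    measure_lt_le_of_cdf_map_le hZm.aemeasurable hYm.aemeasurable
      (by rw [← hFY, ← hFZ]; exact hYZ.1.1 s (by linarith [hs.2]))
  have tail_YX : ∀ s ∈ Set.Ioo δ ε, ℙ {ω | s < Y ω} ≤ ℙ {ω | s < X ω} := fun s hs =>
    measure_lt_le_of_cdf_map_le hYm.aemeasurable hXm.aemeasurable
      (by rw [← hFX, ← hFY]; exact hXY.1.1 s (by linarith [hs.2]))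
  exact ⟨integral_bullSpread_comp_le hδε.le hZm.aemeasurable hYm.aemeasurable tail_ZY,
    integral_bullSpread_comp_le hδε.le hYm.aemeasurable hXm.aemeasurable tail_YX⟩

/-- If `X ≼_cx Y ≼_cx Z` have strictly increasing continuous cdfs with
unique crossing points `d_XY` of `(F_X, F_Y)` and `d_YZ` of `(F_Y, F_Z)`, and
`δ < ε ≤ min {d_XY, d_YZ}`, then `E[r(Z)] ≤ E[r(Y)] ≤ E[r(X)]` for
`r(x) = (x-δ)₊ - (x-ε)₊`. -/
theorem payoff_order_below_crossings {Ω : Type*} [MeasureSpace Ω]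
    (hP : IsProbabilityMeasure (ℙ : Measure Ω))
    (X Y Z : Ω → ℝ) (hXm : Measurable X) (hYm : Measurable Y) (hZm : Measurable Z)
    (hXi : Integrable X) (hYi : Integrable Y) (hZi : Integrable Z)
    (FX FY FZ : ℝ → ℝ)
    (hFX : ∀ x, FX x = cdf ((ℙ : Measure Ω).map X) x)
    (hFY : ∀ x, FY x = cdf ((ℙ : Measure Ω).map Y) x)
    (hFZ : ∀ x, FZ x = cdf ((ℙ : Measure Ω).map Z) x)
    (hXs : StrictMono FX) (hXc : Continuous FX)
    (hYs : StrictMono FY) (hYc : Continuous FY)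
    (hZs : StrictMono FZ) (hZc : Continuous FZ)
    (hmeanXY : (∫ ω, X ω) = ∫ ω, Y ω)
    (hslXY : ∀ x : ℝ, (∫ ω, max (X ω - x) 0) ≤ ∫ ω, max (Y ω - x) 0)
    (hmeanYZ : (∫ ω, Y ω) = ∫ ω, Z ω)
    (hslYZ : ∀ x : ℝ, (∫ ω, max (Y ω - x) 0) ≤ ∫ ω, max (Z ω - x) 0)
    (dXY dYZ : ℝ)
    (hXY : IsCrossPt FX FY dXY ∧ ∀ d', IsCrossPt FX FY d' → d' = dXY)
    (hYZ : IsCrossPt FY FZ dYZ ∧ ∀ d', IsCrossPt FY FZ d' → d' = dYZ)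
    (δ ε : ℝ) (hδε : δ < ε) (hε : ε ≤ min dXY dYZ) :
    (∫ ω, (max (Z ω - δ) 0 - max (Z ω - ε) 0)) ≤
        (∫ ω, (max (Y ω - δ) 0 - max (Y ω - ε) 0)) ∧
      (∫ ω, (max (Y ω - δ) 0 - max (Y ω - ε) 0)) ≤
        ∫ ω, (max (X ω - δ) 0 - max (X ω - ε) 0) :=
  payoff_order_below_crossings_general hP X Y Z hXm hYm hZm FX FY FZ hFX hFY hFZ dXY dYZ hXY hYZ δ ε
    hδε hε
end
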